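/- Let n ≥ 3 and let π ∈ S_n. Then π avoids both the pattern 231 and the pattern 1432, π² avoids the pattern 231, π(n−1) = n and π(n) = n−1, if and only if π = σ ⊕ 21 for some σ ∈ S_{n−2} such that σ avoids both 231 and 1432 and σ² avoids 231. -/

import Mathlib

/-- `π` contains the (classical) pattern `σ`: there is a strictly increasing
sequence of positions on which `π` is order isomorphic to `σ`. -/
def ContainsPat {n k : ℕ} (π : Equiv.Perm (Fin n)) (σ : Equiv.Perm (Fin k)) : Prop :=
  ∃ f : Fin k → Fin n, StrictMono f ∧ ∀ a b : Fin k, σ a < σ b ↔ π (f a) < π (f b)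

/-- `π` avoids the pattern `σ`. -/
def AvoidsPat {n k : ℕ} (π : Equiv.Perm (Fin n)) (σ : Equiv.Perm (Fin k)) : Prop :=
  ¬ ContainsPat π σ

/-- `π` contains the consecutive pattern `σ`: some `k` consecutive positions of `π`
carry values order isomorphic to `σ`. -/
def ContainsConsecPat {n k : ℕ} (π : Equiv.Perm (Fin n)) (σ : Equiv.Perm (Fin k)) : Prop :=
  ∃ (i : ℕ) (h : i + k ≤ n), ∀ a b : Fin k,
    σ a < σ b ↔ π ⟨i + a.val, by have := a.isLt; omega⟩ < π ⟨i + b.val, by have := b.isLt; omega⟩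

/-- `π` avoids the consecutive pattern `σ`. -/
def AvoidsConsecPat {n k : ℕ} (π : Equiv.Perm (Fin n)) (σ : Equiv.Perm (Fin k)) : Prop :=
  ¬ ContainsConsecPat π σ

/-- the pattern 231 (0-indexed: 0 ↦ 1, 1 ↦ 2, 2 ↦ 0) -/
def p231 : Equiv.Perm (Fin 3) := c[0, 1, 2]

/-- the pattern 312 (0-indexed: 0 ↦ 2, 1 ↦ 0, 2 ↦ 1) -/
def p312 : Equiv.Perm (Fin 3) := c[0, 2, 1]

/-- the pattern 213 (0-indexed: 0 ↦ 1, 1 ↦ 0, 2 ↦ 2) -/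
def p213 : Equiv.Perm (Fin 3) := c[0, 1]

/-- the pattern 1432 (0-indexed: 0 ↦ 0, 1 ↦ 3, 2 ↦ 2, 3 ↦ 1) -/
def p1432 : Equiv.Perm (Fin 4) := c[1, 3]

/-- direct sum of two permutations -/
def dsum {k m : ℕ} (σ : Equiv.Perm (Fin k)) (τ : Equiv.Perm (Fin m)) :
    Equiv.Perm (Fin (k + m)) :=
  finSumFinEquiv.symm.trans ((Equiv.sumCongr σ τ).trans finSumFinEquiv)

/-- the Lucas numbers: L₁ = 1, L₂ = 3, L_m = L_{m-1} + L_{m-2} -/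
def lucas : ℕ → ℕ
  | 0 => 2
  | 1 => 1
  | n + 2 => lucas (n + 1) + lucas n

/-!
In `σ ⊕ τ` no inversion straddles the two blocks. Both `231` and `1432` end with an entry
lying below the entry two places earlier, so an occurrence whose last position falls in the
block of `21` would need three positions in that block of size two. Hence `σ ⊕ 21` contains
`231` (resp. `1432`) only if `σ` does, and `(σ ⊕ 21)² = σ² ⊕ 12`. Conversely, a permutation
exchanging the last two points maps the first `n - 2` points onto themselves, so it is
`σ ⊕ 21` for its restriction `σ`.
-/

lemma StrictMono.fin_val_add_sub_lt {N j : ℕ} {f : Fin (j + 1) → Fin N} (hf : StrictMono f)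
    (i : Fin (j + 1)) : (f i : ℕ) + (j - i) < N := by
  have hsub : (Finset.Icc i (Fin.last j)).image f ⊆ Finset.Ici (f i) := by
    intro x hx
    obtain ⟨a, ha, rfl⟩ := Finset.mem_image.mp hx
    exact Finset.mem_Ici.mpr (hf.monotone (Finset.mem_Icc.mp ha).1)
  have hcard := Finset.card_le_card hsub
  rw [Finset.card_image_of_injective _ hf.injective, Fin.card_Icc, Fin.card_Ici,
    Fin.val_last] at hcard
  have := i.is_le
  omega

lemma avoidsPat_permCongr_finCongr {a b j : ℕ} (h : a = b) (ρ : Equiv.Perm (Fin a))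
    (p : Equiv.Perm (Fin j)) :
    AvoidsPat ((finCongr h).permCongr ρ) p ↔ AvoidsPat ρ p := by
  subst h
  simp [AvoidsPat, ContainsPat]

section DirectSum

variable {k m : ℕ}

@[simp]
lemma dsum_castAdd (σ : Equiv.Perm (Fin k)) (τ : Equiv.Perm (Fin m)) (i : Fin k) :
    dsum σ τ (Fin.castAdd m i) = Fin.castAdd m (σ i) := by
  simp [dsum]

@[simp]
lemma dsum_natAdd (σ : Equiv.Perm (Fin k)) (τ : Equiv.Perm (Fin m)) (j : Fin m) :
    dsum σ τ (Fin.natAdd k j) = Fin.natAdd k (τ j) := by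
  simp [dsum]

lemma dsum_val_lt_iff (σ : Equiv.Perm (Fin k)) (τ : Equiv.Perm (Fin m)) (x : Fin (k + m)) :
    (dsum σ τ x : ℕ) < k ↔ (x : ℕ) < k := by
  induction x using Fin.addCases <;> simp

lemma dsum_eq_permCongrHom (σ : Equiv.Perm (Fin k)) (τ : Equiv.Perm (Fin m)) :
    dsum σ τ = finSumFinEquiv.permCongrHom (Equiv.Perm.sumCongrHom _ _ (σ, τ)) :=
  rfl

lemma dsum_pow (σ : Equiv.Perm (Fin k)) (τ : Equiv.Perm (Fin m)) (r : ℕ) :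
    dsum σ τ ^ r = dsum (σ ^ r) (τ ^ r) := by
  simp only [dsum_eq_permCongrHom, ← map_pow, Prod.pow_mk]

lemma exists_eq_dsum_iff (ρ : Equiv.Perm (Fin (k + m))) (τ : Equiv.Perm (Fin m)) :
    (∃ σ, ρ = dsum σ τ) ↔ ∀ j, ρ (Fin.natAdd k j) = Fin.natAdd k (τ j) := by
  refine ⟨by rintro ⟨σ, rfl⟩ j; simp, fun hτ => ?_⟩
  have hleft (i : Fin k) : (ρ (Fin.castAdd m i) : ℕ) < k := by
    by_contra! hge
    have hlt := (ρ (Fin.castAdd m i)).isLt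
    have hj : ρ (Fin.castAdd m i) =
        ρ (Fin.natAdd k (τ⁻¹ ⟨ρ (Fin.castAdd m i) - k, by omega⟩)) := by
      rw [hτ]; ext; simp; omega
    exact absurd (congrArg Fin.val (ρ.injective hj)) (by simp; omega)
  let f (i : Fin k) : Fin k := (ρ (Fin.castAdd m i)).castLT (hleft i)
  have hf : f.Injective := fun i i' h =>
    Fin.castAdd_injective _ _ (ρ.injective (Fin.ext (by simpa [f, Fin.ext_iff] using h)))
  refine ⟨Equiv.ofBijective f (Finite.injective_iff_bijective.mp hf), Equiv.ext fun x => ?_⟩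
  induction x using Fin.addCases with
  | left i => simp [f]
  | right j => simp [hτ]

lemma ContainsPat.dsum_left {j : ℕ} {σ : Equiv.Perm (Fin k)} {τ : Equiv.Perm (Fin m)}
    {p : Equiv.Perm (Fin j)} (h : ContainsPat σ p) : ContainsPat (dsum σ τ) p := by
  obtain ⟨f, hf, hp⟩ := h
  refine ⟨Fin.castAdd m ∘ f, (Fin.strictMono_castAdd m).comp hf, fun a b => ?_⟩
  simp [hp a b, (Fin.strictMono_castAdd m).lt_iff_lt]

lemma ContainsPat.of_dsum {j : ℕ} {σ : Equiv.Perm (Fin k)} {τ : Equiv.Perm (Fin m)}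
    {p : Equiv.Perm (Fin (j + 1))} (i : Fin (j + 1)) (hinv : p (Fin.last j) < p i)
    (hm : m ≤ j - i) (h : ContainsPat (dsum σ τ) p) : ContainsPat σ p := by
  obtain ⟨f, hf, hp⟩ := h
  have hlast : (f (Fin.last j) : ℕ) < k := by
    by_contra! hge
    have hi : k ≤ (f i : ℕ) := by
      have hval_lt := Fin.lt_def.mp ((hp _ _).mp hinv)
      have hval_last := (dsum_val_lt_iff σ τ (f (Fin.last j))).not.mpr hge.not_gt
      have := (dsum_val_lt_iff σ τ (f i)).not.mp (by omega)
      omega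
    have := hf.fin_val_add_sub_lt i
    omega
  have hlt (a : Fin (j + 1)) : (f a : ℕ) < k :=
    lt_of_le_of_lt (hf.monotone (Fin.le_last a)) hlast
  refine ⟨fun a => (f a).castLT (hlt a), fun a b hab => hf hab, fun a b => ?_⟩
  have hval (a : Fin (j + 1)) :
      dsum σ τ (f a) = Fin.castAdd m (σ ((f a).castLT (hlt a))) := by
    rw [← dsum_castAdd, Fin.castAdd_castLT]
  rw [hp a b, hval a, hval b, (Fin.strictMono_castAdd m).lt_iff_lt]

lemma avoidsPat_dsum_iff {j : ℕ} (σ : Equiv.Perm (Fin k)) (τ : Equiv.Perm (Fin m))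
    {p : Equiv.Perm (Fin (j + 1))} (i : Fin (j + 1)) (hinv : p (Fin.last j) < p i)
    (hm : m ≤ j - i) : AvoidsPat (dsum σ τ) p ↔ AvoidsPat σ p :=
  not_congr ⟨ContainsPat.of_dsum i hinv hm, ContainsPat.dsum_left⟩

lemma avoidsPat_dsum_p231_iff (σ : Equiv.Perm (Fin k)) (τ : Equiv.Perm (Fin 2)) :
    AvoidsPat (dsum σ τ) p231 ↔ AvoidsPat σ p231 :=
  avoidsPat_dsum_iff σ τ 0 (by decide) le_rfl

lemma avoidsPat_dsum_p1432_iff (σ : Equiv.Perm (Fin k)) (τ : Equiv.Perm (Fin 2)) :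
    AvoidsPat (dsum σ τ) p1432 ↔ AvoidsPat σ p1432 :=
  avoidsPat_dsum_iff σ τ 1 (by decide) le_rfl

end DirectSum

theorem avoidsPat_and_swaps_last_two_iff (k : ℕ) (ρ : Equiv.Perm (Fin (k + 2))) :
    (AvoidsPat ρ p231 ∧ AvoidsPat ρ p1432 ∧ AvoidsPat (ρ ^ 2) p231 ∧
        ρ (Fin.natAdd k 0) = Fin.natAdd k 1 ∧ ρ (Fin.natAdd k 1) = Fin.natAdd k 0) ↔
      ∃ σ : Equiv.Perm (Fin k), AvoidsPat σ p231 ∧ AvoidsPat σ p1432 ∧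
        AvoidsPat (σ ^ 2) p231 ∧ ρ = dsum σ (Equiv.swap 0 1) := by
  have hblock : (ρ (Fin.natAdd k 0) = Fin.natAdd k 1 ∧ ρ (Fin.natAdd k 1) = Fin.natAdd k 0) ↔
      ∃ σ, ρ = dsum σ (Equiv.swap 0 1) := by
    simp [exists_eq_dsum_iff, Fin.forall_fin_two]
  constructor
  · rintro ⟨h231, h1432, hsq, hswap⟩
    obtain ⟨σ, rfl⟩ := hblock.mp hswap
    rw [dsum_pow, avoidsPat_dsum_p231_iff] at hsq
    rw [avoidsPat_dsum_p231_iff] at h231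
    rw [avoidsPat_dsum_p1432_iff] at h1432
    exact ⟨σ, h231, h1432, hsq, rfl⟩
  · rintro ⟨σ, h231, h1432, hsq, rfl⟩
    rw [dsum_pow, avoidsPat_dsum_p231_iff, avoidsPat_dsum_p231_iff, avoidsPat_dsum_p1432_iff]
    exact ⟨h231, h1432, hsq, hblock.mpr ⟨σ, rfl⟩⟩

/-- for n ≥ 3, π ∈ S_n avoids 231 and 1432, π² avoids 231, π(n−1) = n and
π(n) = n−1, iff π = σ ⊕ 21 for some σ ∈ S_{n−2} avoiding 231 and 1432 with σ² avoiding 231. -/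
theorem stmt6 (n : ℕ) (hn : 3 ≤ n) (π : Equiv.Perm (Fin n)) :
    (AvoidsPat π p231 ∧ AvoidsPat π p1432 ∧ AvoidsPat (π ^ 2) p231 ∧
        π ⟨n - 2, by omega⟩ = ⟨n - 1, by omega⟩ ∧ π ⟨n - 1, by omega⟩ = ⟨n - 2, by omega⟩) ↔
      ∃ σ : Equiv.Perm (Fin (n - 2)),
        AvoidsPat σ p231 ∧ AvoidsPat σ p1432 ∧ AvoidsPat (σ ^ 2) p231 ∧
        π = (finCongr (by omega : (n - 2) + 2 = n)).permCongr
              (dsum σ (Equiv.swap (0 : Fin 2) 1)) := by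
  have h : n - 2 + 2 = n := by omega
  obtain ⟨ρ, rfl⟩ := (finCongr h).permCongr.surjective π
  have hpow : (finCongr h).permCongr ρ ^ 2 = (finCongr h).permCongr (ρ ^ 2) := by
    simp only [← Equiv.permCongrHom_coe, map_pow]
  have hA : (finCongr h).permCongr ρ ⟨n - 2, by omega⟩ = ⟨n - 1, by omega⟩ ↔
      ρ (Fin.natAdd (n - 2) 0) = Fin.natAdd (n - 2) 1 := by
    simp [Fin.ext_iff, Fin.natAdd]
    omega
  have hB : (finCongr h).permCongr ρ ⟨n - 1, by omega⟩ = ⟨n - 2, by omega⟩ ↔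
      ρ (Fin.natAdd (n - 2) 1) = Fin.natAdd (n - 2) 0 := by
    have : n - 1 = n - 2 + 1 := by omega
    simp [Fin.ext_iff, Fin.natAdd, this]
  rw [avoidsPat_permCongr_finCongr, avoidsPat_permCongr_finCongr, hpow,
    avoidsPat_permCongr_finCongr, hA, hB, avoidsPat_and_swaps_last_two_iff]
  simp only [(finCongr h).permCongr.injective.eq_iff]
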